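/- arXiv:2207.05038 — 4 statements merged into one kernel-verified Lean document; each statement's English description precedes it below -/
import Mathlib

section
/- Let N, T ≥ 1 and let A(s) = Σ_{n ≤ N} a_n n^{−s} with complex coefficients a_n. Then ∫_{−T}^{T} |A(it)|² dt = (2T + O(N)) Σ_{n ≤ N} |a_n|², with an absolute implied constant. -/
/-!
Write `F(U) = ∫_{-U}^{U} |A(it)|² dt`. Expanding the square, `F(U)` is the diagonal term
`2U ∑ |a_n|²` plus off-diagonal terms `a_m \bar a_n · 2 sin(Uθ)/θ` with `θ = log n - log m`;
bounding these directly loses a factor `log N`. Integrating once more in `U` over `[p, q]` turns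
the off-diagonal kernels into `O(1/θ²)`, and since `|θ| ≥ |n - m| / N` and `∑_{k ≠ 0} 1/k² < 4`,
Schur's test gives `∫_p^q F = (q² - p²) ∑ |a_n|² + O(N² ∑ |a_n|²)`. As `F` is increasing, averaging
it over `[T, T + N]` and `[T - N, T]` recovers `F(T) = (2T + O(N)) ∑ |a_n|²`.
-/

open Finset MeasureTheory Complex ComplexConjugate

lemma integral_integral_exp_mul {c : ℂ} (hc : c ≠ 0) (p q : ℝ) :
    ∫ U in p..q, ∫ t in -U..U, cexp (c * t) =
      (cexp (c * q) - cexp (c * p) + (cexp (-c * q) - cexp (-c * p))) / c ^ 2 := by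
  have inner : ∀ U : ℝ, ∫ t in -U..U, cexp (c * t) = (cexp (c * U) - cexp (-c * U)) / c := by
    intro U
    rw [integral_exp_mul_complex hc]
    push_cast
    ring_nf
  simp_rw [inner]
  rw [intervalIntegral.integral_div, intervalIntegral.integral_sub
    ((by fun_prop : Continuous fun U : ℝ => cexp (c * U)).intervalIntegrable _ _)
    ((by fun_prop : Continuous fun U : ℝ => cexp (-c * U)).intervalIntegrable _ _),
    integral_exp_mul_complex hc, integral_exp_mul_complex (neg_ne_zero.mpr hc)]
  field_simp
  ring

lemma norm_integral_integral_exp_mul_I_le {θ : ℝ} (hθ : θ ≠ 0) (p q : ℝ) :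
    ‖∫ U in p..q, ∫ t in -U..U, cexp (θ * I * t)‖ ≤ 4 / θ ^ 2 := by
  have hc : (θ : ℂ) * I ≠ 0 := mul_ne_zero (ofReal_ne_zero.mpr hθ) I_ne_zero
  rw [integral_integral_exp_mul hc, norm_div, norm_pow, norm_mul, norm_I, mul_one, norm_real,
    Real.norm_eq_abs, sq_abs]
  gcongr
  calc _ ≤ ‖cexp (θ * I * q)‖ + ‖cexp (θ * I * p)‖ +
          (‖cexp (-(θ * I) * q)‖ + ‖cexp (-(θ * I) * p)‖) :=
        (norm_add_le _ _).trans (add_le_add (norm_sub_le _ _) (norm_sub_le _ _))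
    _ = 4 := by simp [norm_exp]; norm_num

lemma integral_integral_one (p q : ℝ) :
    ∫ U in p..q, ∫ _ in -U..U, (1 : ℂ) = q ^ 2 - p ^ 2 := by
  simp only [intervalIntegral.integral_const, sub_neg_eq_add, real_smul, mul_one]
  rw [intervalIntegral.integral_ofReal]
  have : ∫ U in p..q, (U + U) = q ^ 2 - p ^ 2 := by
    simp_rw [← two_mul]
    rw [intervalIntegral.integral_const_mul, integral_id]
    ring
  exact_mod_cast congrArg ofReal this

lemma continuous_intervalIntegral_neg_self {E : Type*} [NormedAddCommGroup E] [NormedSpace ℝ E]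
    {f : ℝ → E} (hf : Continuous f) : Continuous fun U => ∫ t in -U..U, f t := by
  have hprim := intervalIntegral.continuous_primitive (μ := volume)
    (fun a b => hf.intervalIntegrable a b) 0
  have : (fun U => ∫ t in -U..U, f t) = fun U => (∫ t in 0..U, f t) - ∫ t in 0..(-U), f t := by
    ext U
    rw [intervalIntegral.integral_interval_sub_left (hf.intervalIntegrable _ _)
      (hf.intervalIntegrable _ _)]
  rw [this]
  exact hprim.sub (hprim.comp continuous_neg)

lemma intervalIntegral_sum_sum_mul {ι κ : Type*} (s : Finset ι) (s' : Finset κ)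
    (c : ι → κ → ℂ) {f : ι → κ → ℝ → ℂ} (hf : ∀ i j, Continuous (f i j)) (a b : ℝ) :
    ∫ x in a..b, ∑ i ∈ s, ∑ j ∈ s', c i j * f i j x =
      ∑ i ∈ s, ∑ j ∈ s', c i j * ∫ x in a..b, f i j x := by
  have hint : ∀ i j, IntervalIntegrable (fun x => c i j * f i j x) volume a b :=
    fun i j => ((hf i j).const_mul _).intervalIntegrable _ _
  rw [intervalIntegral.integral_finsetSum fun i _ =>
    (continuous_finsetSum s' fun j _ => (hf i j).const_mul (c i j)).intervalIntegrable a b]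
  refine sum_congr rfl fun i _ => ?_
  rw [intervalIntegral.integral_finsetSum fun j _ => hint i j]
  simp_rw [intervalIntegral.integral_const_mul]

lemma hasSum_one_div_intCast_sq : HasSum (fun k : ℤ => 1 / (k : ℝ) ^ 2) (Real.pi ^ 2 / 3) := by
  have h := hasSum_zeta_two.of_nat_of_neg (f := fun k : ℤ => 1 / (k : ℝ) ^ 2)
    (by simpa using hasSum_zeta_two)
  have hval : Real.pi ^ 2 / 6 + Real.pi ^ 2 / 6 - 1 / ((0 : ℤ) : ℝ) ^ 2 = Real.pi ^ 2 / 3 := by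
    simp only [Int.cast_zero, ne_eq, OfNat.ofNat_ne_zero, not_false_eq_true, zero_pow, div_zero,
      sub_zero]
    ring
  rwa [hval] at h

lemma sum_one_div_intCast_sq_le (s : Finset ℤ) : ∑ k ∈ s, 1 / (k : ℝ) ^ 2 ≤ 4 :=
  calc ∑ k ∈ s, 1 / (k : ℝ) ^ 2 ≤ Real.pi ^ 2 / 3 :=
        hasSum_one_div_intCast_sq.summable.sum_le_tsum s (fun _ _ => by positivity) |>.trans_eq
          hasSum_one_div_intCast_sq.tsum_eq
    _ ≤ 4 := by nlinarith [Real.pi_lt_d2, Real.pi_pos]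

-- The term `n = m`, if present, is `1 / 0 = 0`.
lemma sum_one_div_natCast_sub_sq_le (s : Finset ℕ) (m : ℕ) :
    ∑ n ∈ s, 1 / ((n : ℝ) - m) ^ 2 ≤ 4 := by
  have hinj : Set.InjOn (fun n : ℕ => (n : ℤ) - m) s := fun x _ y _ h => by simpa using h
  calc ∑ n ∈ s, 1 / ((n : ℝ) - m) ^ 2
      = ∑ k ∈ s.image (fun n : ℕ => (n : ℤ) - m), 1 / (k : ℝ) ^ 2 := by
        rw [sum_image hinj]; push_cast; rfl
    _ ≤ 4 := sum_one_div_intCast_sq_le _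

lemma sum_sum_mul_mul_le_sum_sq_mul_sum {ι : Type*} (s : Finset ι) (x : ι → ℝ)
    {k : ι → ι → ℝ} (hk : ∀ i j, 0 ≤ k i j) (hsymm : ∀ i j, k i j = k j i) :
    ∑ i ∈ s, ∑ j ∈ s, x i * x j * k i j ≤ ∑ i ∈ s, x i ^ 2 * ∑ j ∈ s, k i j := by
  have hswap : ∑ i ∈ s, ∑ j ∈ s, x j ^ 2 * k i j = ∑ i ∈ s, ∑ j ∈ s, x i ^ 2 * k i j := by
    rw [sum_comm]; simp_rw [hsymm]
  have hamgm : ∀ i j, x i * x j * k i j ≤ (x i ^ 2 * k i j + x j ^ 2 * k i j) / 2 := fun i j => by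
    nlinarith [mul_nonneg (sq_nonneg (x i - x j)) (hk i j)]
  calc ∑ i ∈ s, ∑ j ∈ s, x i * x j * k i j
      ≤ ∑ i ∈ s, ∑ j ∈ s, (x i ^ 2 * k i j + x j ^ 2 * k i j) / 2 := by
        gcongr; exact hamgm _ _
    _ = ∑ i ∈ s, x i ^ 2 * ∑ j ∈ s, k i j := by
      simp only [← sum_div, sum_add_distrib, hswap, mul_sum]
      ring

lemma abs_sub_le_mul_abs_log_sub {x y M : ℝ} (hx : 0 < x) (hy : 0 < y) (hxM : x ≤ M)
    (hyM : y ≤ M) : |x - y| ≤ M * |Real.log x - Real.log y| := by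
  wlog hxy : x ≤ y generalizing x y
  · rw [abs_sub_comm, abs_sub_comm (Real.log x)]
    exact this hy hx hyM hxM (le_of_not_ge hxy)
  have hlog : 1 - x / y ≤ Real.log y - Real.log x := by
    rw [← Real.log_div hy.ne' hx.ne']
    simpa using Real.one_sub_inv_le_log_of_pos (div_pos hy hx)
  rw [abs_sub_comm, abs_of_nonneg (sub_nonneg.mpr hxy),
    abs_sub_comm, abs_of_nonneg (sub_nonneg.mpr (Real.log_le_log hx hxy))]
  calc y - x = y * (1 - x / y) := by field_simp
    _ ≤ M * (Real.log y - Real.log x) :=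
      mul_le_mul hyM hlog (by rwa [sub_nonneg, div_le_one hy]) (hy.le.trans hyM)

/-- `A(it)` for the Dirichlet polynomial `A(s) = ∑_{n ≤ N} a_n n^{-s}`. -/
noncomputable def dirichletPolyI (a : ℕ → ℂ) (N : ℕ) (t : ℝ) : ℂ :=
  ∑ n ∈ Icc 1 N, a n * (n : ℂ) ^ (-(I * t))

lemma natCast_cpow_neg_I_mul_mul_conj {m n : ℕ} (hm : m ≠ 0) (hn : n ≠ 0) (t : ℝ) :
    (m : ℂ) ^ (-(I * t)) * conj ((n : ℂ) ^ (-(I * t))) =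
      cexp ((Real.log n - Real.log m : ℝ) * I * t) := by
  rw [cpow_def_of_ne_zero (Nat.cast_ne_zero.mpr hm), cpow_def_of_ne_zero (Nat.cast_ne_zero.mpr hn),
    ← exp_conj, ← exp_add, ← natCast_log, ← natCast_log]
  simp only [map_mul, map_neg, conj_ofReal, conj_I]
  push_cast
  ring_nf

lemma continuous_dirichletPolyI (a : ℕ → ℂ) (N : ℕ) : Continuous (dirichletPolyI a N) := by
  refine continuous_finsetSum _ fun n hn => continuous_const.mul ?_
  exact (by fun_prop : Continuous fun t : ℝ => -(I * t)).const_cpow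
    (Or.inl (Nat.cast_ne_zero.mpr (by simp at hn; omega)))

lemma sq_norm_dirichletPolyI (a : ℕ → ℂ) (N : ℕ) (t : ℝ) :
    ((‖dirichletPolyI a N t‖ ^ 2 : ℝ) : ℂ) = ∑ m ∈ Icc 1 N, ∑ n ∈ Icc 1 N,
      a m * conj (a n) * cexp ((Real.log n - Real.log m : ℝ) * I * t) := by
  rw [ofReal_pow, ← mul_conj', dirichletPolyI, map_sum, sum_mul_sum]
  refine sum_congr rfl fun m hm => sum_congr rfl fun n hn => ?_
  rw [map_mul, mul_mul_mul_comm, natCast_cpow_neg_I_mul_mul_conj (by simp at hm; omega)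
    (by simp at hn; omega)]

lemma integral_integral_sq_norm_dirichletPolyI (a : ℕ → ℂ) (N : ℕ) (p q : ℝ) :
    ((∫ U in p..q, ∫ t in -U..U, ‖dirichletPolyI a N t‖ ^ 2 : ℝ) : ℂ) =
      ∑ m ∈ Icc 1 N, ∑ n ∈ Icc 1 N, a m * conj (a n) *
        ∫ U in p..q, ∫ t in -U..U, cexp ((Real.log n - Real.log m : ℝ) * I * t) := by
  have hexp : ∀ θ : ℝ, Continuous fun t : ℝ => cexp (θ * I * t) := fun θ => by fun_prop
  simp_rw [← intervalIntegral.integral_ofReal, sq_norm_dirichletPolyI,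
    intervalIntegral_sum_sum_mul _ _ _ fun _ _ => hexp _]
  exact intervalIntegral_sum_sum_mul _ _ _
    (fun _ _ => continuous_intervalIntegral_neg_self (hexp _)) _ _

lemma norm_integral_integral_exp_log_sub_le {N m n : ℕ} (hm : m ∈ Icc 1 N) (hn : n ∈ Icc 1 N)
    (p q : ℝ) :
    ‖(∫ U in p..q, ∫ t in -U..U, cexp ((Real.log n - Real.log m : ℝ) * I * t)) -
        if m = n then (q ^ 2 - p ^ 2 : ℂ) else 0‖ ≤ 4 * N ^ 2 / ((n : ℝ) - m) ^ 2 := by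
  rw [mem_Icc] at hm hn
  by_cases hmn : m = n
  · subst hmn
    simp only [sub_self, ofReal_zero, zero_mul, exp_zero, integral_integral_one, if_true,
      norm_zero]
    positivity
  have hmR : (0 : ℝ) < m := by exact_mod_cast hm.1
  have hnR : (0 : ℝ) < n := by exact_mod_cast hn.1
  have hsub : (n : ℝ) - m ≠ 0 := sub_ne_zero.mpr (by exact_mod_cast Ne.symm hmn)
  have hθ : Real.log n - Real.log m ≠ 0 := fun h => hsub (by
    rw [Real.log_injOn_pos hnR hmR (sub_eq_zero.mp h), sub_self])
  have hgap : ((n : ℝ) - m) ^ 2 ≤ N ^ 2 * (Real.log n - Real.log m) ^ 2 := by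
    rw [← sq_abs, ← sq_abs (Real.log n - _), ← mul_pow]
    gcongr
    exact abs_sub_le_mul_abs_log_sub hnR hmR (by exact_mod_cast hn.2) (by exact_mod_cast hm.2)
  rw [if_neg hmn, sub_zero]
  calc _ ≤ 4 / (Real.log n - Real.log m) ^ 2 := norm_integral_integral_exp_mul_I_le hθ p q
    _ ≤ 4 * N ^ 2 / ((n : ℝ) - m) ^ 2 := by
      rw [div_le_div_iff₀ (by positivity) (by positivity)]
      nlinarith

lemma abs_integral_integral_sq_norm_dirichletPolyI_sub_le (a : ℕ → ℂ) (N : ℕ) (p q : ℝ) :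
    |(∫ U in p..q, ∫ t in -U..U, ‖dirichletPolyI a N t‖ ^ 2) -
        (∑ n ∈ Icc 1 N, ‖a n‖ ^ 2) * (q ^ 2 - p ^ 2)| ≤
      16 * N ^ 2 * ∑ n ∈ Icc 1 N, ‖a n‖ ^ 2 := by
  set J : ℕ → ℕ → ℂ := fun m n =>
    ∫ U in p..q, ∫ t in -U..U, cexp ((Real.log n - Real.log m : ℝ) * I * t)
  set k : ℕ → ℕ → ℝ := fun m n => 4 * N ^ 2 / ((n : ℝ) - m) ^ 2
  have hdiag : (((∑ n ∈ Icc 1 N, ‖a n‖ ^ 2) * (q ^ 2 - p ^ 2) : ℝ) : ℂ) =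
      ∑ m ∈ Icc 1 N, ∑ n ∈ Icc 1 N,
        a m * conj (a n) * if m = n then (q ^ 2 - p ^ 2 : ℂ) else 0 := by
    push_cast
    rw [sum_mul]
    refine sum_congr rfl fun m hm => ?_
    simp_rw [mul_ite, mul_zero, sum_ite_eq, if_pos hm, mul_conj']
  have hsplit : ((((∫ U in p..q, ∫ t in -U..U, ‖dirichletPolyI a N t‖ ^ 2) -
      (∑ n ∈ Icc 1 N, ‖a n‖ ^ 2) * (q ^ 2 - p ^ 2)) : ℝ) : ℂ) =
      ∑ m ∈ Icc 1 N, ∑ n ∈ Icc 1 N,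
        a m * conj (a n) * (J m n - if m = n then (q ^ 2 - p ^ 2 : ℂ) else 0) := by
    rw [ofReal_sub, integral_integral_sq_norm_dirichletPolyI, hdiag, ← sum_sub_distrib]
    simp_rw [← sum_sub_distrib, mul_sub]
    rfl
  rw [← Real.norm_eq_abs, ← norm_real, hsplit]
  calc _ ≤ ∑ m ∈ Icc 1 N, ∑ n ∈ Icc 1 N, ‖a m‖ * ‖a n‖ * k m n := by
        refine (norm_sum_le _ _).trans (sum_le_sum fun m hm => (norm_sum_le _ _).trans
          (sum_le_sum fun n hn => ?_))
        rw [norm_mul, norm_mul, norm_conj]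
        gcongr
        exact norm_integral_integral_exp_log_sub_le hm hn p q
    _ ≤ ∑ m ∈ Icc 1 N, ‖a m‖ ^ 2 * ∑ n ∈ Icc 1 N, k m n :=
        sum_sum_mul_mul_le_sum_sq_mul_sum _ _ (fun _ _ => by positivity) fun m n => by
          simp only [k]; ring
    _ ≤ ∑ m ∈ Icc 1 N, ‖a m‖ ^ 2 * (4 * N ^ 2 * 4) := by
        gcongr with m
        simp only [k]
        simp_rw [div_eq_mul_one_div (4 * (N : ℝ) ^ 2), ← mul_sum]
        gcongr
        exact sum_one_div_natCast_sub_sq_le _ _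
    _ = 16 * N ^ 2 * ∑ n ∈ Icc 1 N, ‖a n‖ ^ 2 := by rw [← sum_mul]; ring

lemma monotoneOn_intervalIntegral_neg_self {g : ℝ → ℝ} (hg : Continuous g) (hg0 : 0 ≤ g) :
    MonotoneOn (fun U => ∫ t in -U..U, g t) (Set.Ici 0) := fun _ hp _ _ hpq =>
  intervalIntegral.integral_mono_interval (neg_le_neg hpq) (neg_le_self hp) hpq
    (ae_of_all _ hg0) (hg.intervalIntegrable _ _)

lemma MonotoneOn.mul_le_intervalIntegral {F : ℝ → ℝ} {a h : ℝ}
    (hF : MonotoneOn F (Set.Icc a (a + h))) (hh : 0 ≤ h) : h * F a ≤ ∫ U in a..a + h, F U := by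
  have hle : a ≤ a + h := le_add_of_nonneg_right hh
  calc h * F a = ∫ _ in a..a + h, F a := by simp
    _ ≤ ∫ U in a..a + h, F U :=
      intervalIntegral.integral_mono_on hle intervalIntegrable_const
        (MonotoneOn.intervalIntegrable (by rwa [Set.uIcc_of_le hle]))
        fun U hU => hF (Set.left_mem_Icc.mpr hle) hU hU.1

lemma MonotoneOn.intervalIntegral_le_mul {F : ℝ → ℝ} {a h : ℝ}
    (hF : MonotoneOn F (Set.Icc (a - h) a)) (hh : 0 ≤ h) : ∫ U in a - h..a, F U ≤ h * F a := by
  have hle : a - h ≤ a := sub_le_self a hh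
  calc ∫ U in a - h..a, F U ≤ ∫ _ in a - h..a, F a :=
      intervalIntegral.integral_mono_on hle
        (MonotoneOn.intervalIntegrable (by rwa [Set.uIcc_of_le hle])) intervalIntegrable_const
        fun U hU => hF hU (Set.right_mem_Icc.mpr hle) hU.2
    _ = h * F a := by simp

lemma abs_sub_two_mul_le_of_abs_intervalIntegral_sub_le {F : ℝ → ℝ} {S B h T : ℝ}
    (hF : MonotoneOn F (Set.Ici 0)) (hF0 : 0 ≤ F 0) (hS : 0 ≤ S) (hh : 0 < h) (hT : 0 ≤ T)
    (happrox : ∀ p q, 0 ≤ p → p ≤ q → |(∫ U in p..q, F U) - S * (q ^ 2 - p ^ 2)| ≤ B) :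
    |F T - 2 * T * S| ≤ 2 * h * S + B / h := by
  have hBh : 0 ≤ B / h := div_nonneg ((abs_nonneg _).trans (happrox 0 0 le_rfl le_rfl)) hh.le
  have hupper : F T - 2 * T * S - h * S ≤ B / h := by
    have hmono := (hF.mono fun U hU => hT.trans hU.1).mul_le_intervalIntegral hh.le
    have happ := (abs_le.mp (happrox T (T + h) hT (by linarith))).2
    rw [le_div_iff₀ hh]
    nlinarith
  have hlower : 2 * T * S - 2 * h * S - B / h ≤ F T := by
    rcases le_or_gt h T with hhT | hTh
    · have hmono := (hF.mono fun U hU => (sub_nonneg.mpr hhT).trans hU.1).intervalIntegral_le_mul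
        hh.le
      have happ := (abs_le.mp (happrox (T - h) T (by linarith) (by linarith))).1
      have : 2 * T * S - h * S - F T ≤ B / h := by
        rw [le_div_iff₀ hh]
        nlinarith
      nlinarith
    · nlinarith [hF Set.self_mem_Ici hT hT]
  rw [abs_le]
  constructor <;> nlinarith

lemma exists_abs_le_and_eq_add_mul {x y S c : ℝ} (hS : 0 ≤ S) (hc : 0 ≤ c)
    (h : |x - y * S| ≤ c * S) : ∃ E, |E| ≤ c ∧ x = (y + E) * S := by
  rcases hS.eq_or_lt with rfl | hS
  · exact ⟨0, by simpa using hc, by simpa using h⟩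
  · refine ⟨(x - y * S) / S, ?_, by field_simp; ring⟩
    rwa [abs_div, abs_of_pos hS, div_le_iff₀ hS]

/-- Classical mean value theorem for Dirichlet polynomials:
`∫_{-T}^T |A(it)|² dt = (2T + O(N)) ∑_{n ≤ N} |a_n|²`. -/
theorem stmt2 :
    ∃ C : ℝ, 0 < C ∧ ∀ (N : ℕ) (T : ℝ) (a : ℕ → ℂ), 1 ≤ N → 1 ≤ T →
      ∃ E : ℝ, |E| ≤ C * N ∧
        (∫ t in (-T)..T,
            ‖∑ n ∈ Finset.Icc 1 N, a n * (n : ℂ) ^ (-(Complex.I * (t : ℂ)))‖ ^ 2) =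
          (2 * T + E) * ∑ n ∈ Finset.Icc 1 N, ‖a n‖ ^ 2 := by
  refine ⟨18, by norm_num, fun N T a hN hT => ?_⟩
  have hNpos : (0 : ℝ) < N := by exact_mod_cast hN
  have hcont := continuous_dirichletPolyI a N
  have hbound := abs_sub_two_mul_le_of_abs_intervalIntegral_sub_le (h := N)
    (monotoneOn_intervalIntegral_neg_self (g := fun t => ‖dirichletPolyI a N t‖ ^ 2)
      (by fun_prop) fun t => by positivity)
    (by simp) (by positivity) hNpos (by linarith) fun p q _ _ =>
      abs_integral_integral_sq_norm_dirichletPolyI_sub_le a N p q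
  refine exists_abs_le_and_eq_add_mul (by positivity) (by positivity) (hbound.trans_eq ?_)
  field_simp
  ring
end

section
/- Let X ≥ 3, z₀ = exp((log X)/(log log X)³) and D = exp((log X)/(log log X)). Then Σ_{e | P(z₀), D < e ≤ D z₀} d₃(e)/e ≪_A (log X)^{−A} for any fixed A > 0, where the sum runs over squarefree z₀-smooth integers e in the range (D, D z₀]. -/
open Finset Real

/-- The `k`-fold divisor function. -/
def dk : ℕ → ℕ → ℕ
  | 0, n => if n = 1 then 1 else 0
  | (k + 1), n => ∑ d ∈ n.divisors, dk k (n / d)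

/-!
Rankin's trick: for `D ≤ e` and `σ ≥ 0` we have `1 / e ≤ D ^ (-σ) * e ^ (σ - 1)`, so the sum is
at most `D ^ (-σ)` times the Euler product `∏_{p ≤ z₀} (1 + 3 p ^ (σ - 1))`. With
`σ = 1 / log z₀ = (log log X) ^ 3 / log X` every `p ^ σ` is at most `e`, so the product is at most
`exp (3e ∑_{p ≤ z₀} 1 / p)`, which is `exp (O (log log X))` by the Chebyshev-type bound
`∑_{p ≤ x} 1 / p ≤ 4 log log x + 8` (obtained from `primorial n ≤ 4 ^ n` on dyadic blocks).
Meanwhile `D ^ (-σ) = exp (-(log log X) ^ 2)`, which beats every power of `log X`.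
-/

open ArithmeticFunction ArithmeticFunction.zeta in
theorem dk_eq_zeta_pow (k n : ℕ) : dk k n = (ζ ^ k : ArithmeticFunction ℕ) n := by
  induction k generalizing n with
  | zero => simp [dk, one_apply]
  | succ k ih =>
    rw [pow_succ, mul_comm, zeta_mul_apply, ← Nat.sum_div_divisors]
    exact Finset.sum_congr rfl fun d _ => ih (n / d)

theorem dk_prime (k : ℕ) {p : ℕ} (hp : p.Prime) : dk k p = k := by
  induction k with
  | zero => simp [dk, hp.ne_one]
  | succ k ih =>
    rw [dk, hp.divisors, Finset.sum_pair hp.one_lt.ne, Nat.div_one, Nat.div_self hp.pos, ih,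
      dk_eq_zeta_pow, ArithmeticFunction.isMultiplicative_zeta.pow.map_one]

namespace ArithmeticFunction

noncomputable def mulRpow (f : ArithmeticFunction ℝ) (s : ℝ) : ArithmeticFunction ℝ :=
  ⟨fun n => f n * (n : ℝ) ^ s, by simp⟩

@[simp]
theorem mulRpow_apply (f : ArithmeticFunction ℝ) (s : ℝ) (n : ℕ) :
    f.mulRpow s n = f n * (n : ℝ) ^ s := rfl

theorem IsMultiplicative.mulRpow {f : ArithmeticFunction ℝ} (hf : f.IsMultiplicative) (s : ℝ) :
    (f.mulRpow s).IsMultiplicative := by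
  refine ⟨by simp [hf.map_one], fun {m n} hmn => ?_⟩
  simp only [mulRpow_apply, hf.map_mul_of_coprime hmn, Nat.cast_mul,
    mul_rpow m.cast_nonneg n.cast_nonneg]
  ring

theorem IsMultiplicative.sum_divisors_primorial {R : Type*} [CommSemiring R]
    {f : ArithmeticFunction R} (hf : f.IsMultiplicative) (n : ℕ) :
    ∑ d ∈ (primorial n).divisors, f d = ∏ p ∈ Nat.primesLE n, (1 + f p) := by
  rw [← hf.prodPrimeFactors_one_add_of_squarefree (squarefree_primorial n),
    primeFactors_primorial]

end ArithmeticFunction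

open ArithmeticFunction ArithmeticFunction.zeta in
theorem sum_divisors_primorial_dk_mul_rpow (k n : ℕ) (s : ℝ) :
    ∑ d ∈ (primorial n).divisors, (dk k d : ℝ) * (d : ℝ) ^ s =
      ∏ p ∈ Nat.primesLE n, (1 + k * (p : ℝ) ^ s) := by
  have hmul := (isMultiplicative_zeta.pow (k := k)).natCast (R := ℝ) |>.mulRpow s
  convert hmul.sum_divisors_primorial n using 2 with d _ p hp
  · simp [dk_eq_zeta_pow]
  · simp [← dk_eq_zeta_pow, dk_prime k (Nat.prime_of_mem_primesLE hp)]

theorem Squarefree.dvd_primorial_of_primeFactors_le {e n : ℕ} (he : Squarefree e)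
    (hle : ∀ p ∈ e.primeFactors, p ≤ n) : e ∣ primorial n := by
  rw [← Nat.prod_primeFactors_of_squarefree he, primorial_eq_prod_primesLE]
  exact prod_dvd_prod_of_subset _ _ _ fun p hp =>
    Nat.mem_primesLE.2 ⟨hle p hp, Nat.prime_of_mem_primeFactors hp⟩

theorem div_le_rpow_neg_mul_rpow_sub_one {a x D σ : ℝ} (ha : 0 ≤ a) (hD : 0 < D) (hDx : D ≤ x)
    (hσ : 0 ≤ σ) : a / x ≤ D ^ (-σ) * (a * x ^ (σ - 1)) := by
  have hx : 0 < x := hD.trans_le hDx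
  have hone : 1 ≤ D ^ (-σ) * x ^ σ := by
    rw [rpow_neg hD.le, inv_mul_eq_div, one_le_div (rpow_pos_of_pos hD σ)]
    exact rpow_le_rpow hD.le hDx hσ
  calc a / x ≤ a / x * (D ^ (-σ) * x ^ σ) := le_mul_of_one_le_right (by positivity) hone
    _ = D ^ (-σ) * (a * x ^ (σ - 1)) := by rw [rpow_sub_one hx.ne']; ring

theorem sum_dk_div_le_rpow_neg_mul_prod (k n : ℕ) {F : Finset ℕ} {D σ : ℝ} (hD : 0 < D)
    (hσ : 0 ≤ σ) (hF : ∀ e ∈ F, Squarefree e ∧ (∀ p ∈ e.primeFactors, p ≤ n) ∧ D ≤ e) :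
    ∑ e ∈ F, (dk k e : ℝ) / e ≤ D ^ (-σ) * ∏ p ∈ Nat.primesLE n, (1 + k * (p : ℝ) ^ (σ - 1)) := by
  have hsub : F ⊆ (primorial n).divisors := fun e he =>
    Nat.mem_divisors.2 ⟨(hF e he).1.dvd_primorial_of_primeFactors_le (hF e he).2.1,
      primorial_ne_zero n⟩
  calc ∑ e ∈ F, (dk k e : ℝ) / e
      ≤ ∑ e ∈ F, D ^ (-σ) * ((dk k e : ℝ) * (e : ℝ) ^ (σ - 1)) :=
        sum_le_sum fun e he => div_le_rpow_neg_mul_rpow_sub_one (by positivity) hD (hF e he).2.2 hσ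
    _ ≤ D ^ (-σ) * ∑ d ∈ (primorial n).divisors, (dk k d : ℝ) * (d : ℝ) ^ (σ - 1) := by
        rw [← mul_sum]
        gcongr
    _ = D ^ (-σ) * ∏ p ∈ Nat.primesLE n, (1 + k * (p : ℝ) ^ (σ - 1)) := by
        rw [sum_divisors_primorial_dk_mul_rpow]

theorem prod_one_add_mul_rpow_sub_one_le_exp {S : Finset ℕ} {k B σ : ℝ} (hk : 0 ≤ k)
    (hS : ∀ p ∈ S, 0 < p ∧ (p : ℝ) ^ σ ≤ B) :
    ∏ p ∈ S, (1 + k * (p : ℝ) ^ (σ - 1)) ≤ exp (k * B * ∑ p ∈ S, (1 : ℝ) / p) := by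
  rw [mul_sum, exp_sum]
  refine prod_le_prod (fun p hp => by positivity) fun p hp => ?_
  have hp0 : (0 : ℝ) < p := Nat.cast_pos.2 (hS p hp).1
  calc 1 + k * (p : ℝ) ^ (σ - 1) ≤ exp (k * (p : ℝ) ^ (σ - 1)) := by
        linarith [add_one_le_exp (k * (p : ℝ) ^ (σ - 1))]
    _ ≤ exp (k * B * (1 / p)) := by
        rw [rpow_sub_one hp0.ne', exp_le_exp, mul_one_div, mul_div_assoc]
        gcongr
        exact (hS p hp).2

theorem mul_card_le_two_pow_of_dyadic {j : ℕ} {T : Finset ℕ}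
    (hT : ∀ p ∈ T, p.Prime ∧ 2 ^ j ≤ p ∧ p < 2 ^ (j + 1)) : j * #T ≤ 2 ^ (j + 2) := by
  have hprod : ∏ p ∈ T, p ∣ primorial (2 ^ (j + 1)) := by
    rw [primorial_eq_prod_primesLE]
    exact prod_dvd_prod_of_subset _ _ _ fun p hp =>
      Nat.mem_primesLE.2 ⟨(hT p hp).2.2.le, (hT p hp).1⟩
  have : 2 ^ (j * #T) ≤ 2 ^ 2 ^ (j + 2) :=
    calc 2 ^ (j * #T) = ∏ _p ∈ T, 2 ^ j := by rw [prod_const, pow_mul]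
      _ ≤ ∏ p ∈ T, p := prod_le_prod' fun p hp => (hT p hp).2.1
      _ ≤ primorial (2 ^ (j + 1)) := Nat.le_of_dvd (primorial_pos _) hprod
      _ ≤ 4 ^ 2 ^ (j + 1) := primorial_le_four_pow _
      _ = 2 ^ 2 ^ (j + 2) := by rw [show 4 = 2 ^ 2 from rfl, ← pow_mul]; ring_nf
  exact (Nat.pow_le_pow_iff_right one_lt_two).1 this

theorem sum_one_div_le_of_dyadic {j : ℕ} {T : Finset ℕ}
    (hT : ∀ p ∈ T, p.Prime ∧ 2 ^ j ≤ p ∧ p < 2 ^ (j + 1)) : ∑ p ∈ T, (1 : ℝ) / p ≤ 4 / j := by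
  rcases j.eq_zero_or_pos with rfl | hj
  · have : T = ∅ := eq_empty_of_forall_notMem fun p hp =>
      (hT p hp).1.two_le.not_gt (hT p hp).2.2
    simp [this]
  have hcard : (j : ℝ) * #T ≤ 2 ^ j * 4 := by
    exact_mod_cast (mul_card_le_two_pow_of_dyadic hT).trans_eq (by ring)
  calc ∑ p ∈ T, (1 : ℝ) / p ≤ ∑ _p ∈ T, 1 / (2 : ℝ) ^ j :=
        sum_le_sum fun p hp => one_div_le_one_div_of_le (by positivity)
          (by exact_mod_cast (hT p hp).2.1)
    _ = #T / 2 ^ j := by rw [sum_const, nsmul_eq_mul, mul_one_div]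
    _ ≤ 4 / j := by
        rw [div_le_div_iff₀ (by positivity) (by exact_mod_cast hj)]
        linarith

theorem sum_primesLE_one_div_le (n : ℕ) :
    ∑ p ∈ Nat.primesLE n, (1 : ℝ) / p ≤ 4 * (1 + log (Nat.log 2 n)) := by
  have hmaps : ∀ p ∈ Nat.primesLE n, Nat.log 2 p ∈ Icc 1 (Nat.log 2 n) := fun p hp => by
    obtain ⟨hpn, hp⟩ := Nat.mem_primesLE.1 hp
    exact mem_Icc.2 ⟨Nat.log_pos one_lt_two hp.two_le, Nat.log_mono_right hpn⟩
  rw [← sum_fiberwise_of_maps_to hmaps]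
  calc _ ≤ ∑ j ∈ Icc 1 (Nat.log 2 n), 4 / (j : ℝ) := sum_le_sum fun j _ =>
        sum_one_div_le_of_dyadic fun p hp => by
          obtain ⟨hpn, rfl⟩ := mem_filter.1 hp
          have hp := Nat.prime_of_mem_primesLE hpn
          exact ⟨hp, Nat.pow_log_le_self 2 hp.ne_zero, Nat.lt_pow_succ_log_self one_lt_two p⟩
    _ = 4 * harmonic (Nat.log 2 n) := by
        rw [harmonic_eq_sum_Icc]; push_cast; rw [mul_sum]; simp [div_eq_mul_inv]
    _ ≤ 4 * (1 + log (Nat.log 2 n)) := by gcongr; exact harmonic_le_one_add_log _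

theorem sum_primesLE_floor_one_div_le {x : ℝ} (hx : exp 1 ≤ x) :
    ∑ p ∈ Nat.primesLE ⌊x⌋₊, (1 : ℝ) / p ≤ 4 * (2 + log (log x)) := by
  have hlogx : 1 ≤ log x := by rwa [le_log_iff_exp_le ((exp_pos 1).trans_le hx)]
  have hJ : log (Nat.log 2 ⌊x⌋₊) ≤ 1 + log (log x) := by
    rcases (Nat.log 2 ⌊x⌋₊).eq_zero_or_pos with h | h
    · rw [h, Nat.cast_zero, log_zero]
      linarith [log_nonneg hlogx]
    calc log (Nat.log 2 ⌊x⌋₊) ≤ log (2 * log x) := by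
          refine log_le_log (by exact_mod_cast h) ?_
          calc (Nat.log 2 ⌊x⌋₊ : ℝ) ≤ logb 2 ⌊x⌋₊ := natLog_le_logb _ _
            _ ≤ logb 2 x := logb_le_logb_of_le (b := 2) one_lt_two
                (Nat.cast_pos.2 (Nat.pos_of_ne_zero fun h0 => by simp [h0] at h))
                (Nat.floor_le (by linarith [add_one_le_exp 1]))
            _ ≤ 2 * log x := by
                rw [logb, div_le_iff₀ (log_pos one_lt_two)]
                nlinarith [log_two_gt_d9]
      _ = log 2 + log (log x) := log_mul two_ne_zero (by linarith)
      _ ≤ 1 + log (log x) := by linarith [log_two_lt_d9]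
  linarith [sum_primesLE_one_div_le ⌊x⌋₊]

theorem sum_dk_div_le_exp (k : ℕ) {z D : ℝ} (hz : 1 < z) (hD : 0 < D) {F : Finset ℕ}
    (hF : ∀ e ∈ F, Squarefree e ∧ (∀ p ∈ e.primeFactors, (p : ℝ) ≤ z) ∧ D ≤ e) :
    ∑ e ∈ F, (dk k e : ℝ) / e ≤
      exp (-(log D / log z) + k * exp 1 * ∑ p ∈ Nat.primesLE ⌊z⌋₊, (1 : ℝ) / p) := by
  have hlogz : 0 < log z := log_pos hz
  have hσ : 0 < (log z)⁻¹ := inv_pos.2 hlogz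
  have hsmall : ∀ p ∈ Nat.primesLE ⌊z⌋₊, 0 < p ∧ (p : ℝ) ^ (log z)⁻¹ ≤ exp 1 := fun p hp => by
    obtain ⟨hpz, hp⟩ := Nat.mem_primesLE.1 hp
    refine ⟨hp.pos, ?_⟩
    calc (p : ℝ) ^ (log z)⁻¹ ≤ z ^ (log z)⁻¹ :=
          rpow_le_rpow p.cast_nonneg ((Nat.cast_le.2 hpz).trans (Nat.floor_le (by linarith))) hσ.le
      _ = exp 1 := by rw [rpow_def_of_pos (by linarith), mul_inv_cancel₀ hlogz.ne']
  calc ∑ e ∈ F, (dk k e : ℝ) / e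
      ≤ D ^ (-(log z)⁻¹) * ∏ p ∈ Nat.primesLE ⌊z⌋₊, (1 + k * (p : ℝ) ^ ((log z)⁻¹ - 1)) :=
        sum_dk_div_le_rpow_neg_mul_prod k ⌊z⌋₊ hD hσ.le fun e he =>
          ⟨(hF e he).1, fun p hp => Nat.le_floor ((hF e he).2.1 p hp), (hF e he).2.2⟩
    _ ≤ exp (-(log D / log z)) * exp (k * exp 1 * ∑ p ∈ Nat.primesLE ⌊z⌋₊, (1 : ℝ) / p) := by
        rw [rpow_def_of_pos hD, mul_neg, ← div_eq_mul_inv]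
        gcongr
        exact prod_one_add_mul_rpow_sub_one_le_exp k.cast_nonneg hsmall
    _ = _ := (exp_add _ _).symm

theorem one_lt_log_three : 1 < log 3 := lt_trans (by norm_num) log_three_gt_d9

theorem sum_primesLE_floor_exp_div_log_pow_le {L : ℝ} (hL : log 3 ≤ L) :
    ∑ p ∈ Nat.primesLE ⌊exp (L / log L ^ 3)⌋₊, (1 : ℝ) / p ≤
      4 * (2 + log (1 + (log (log 3) ^ 3)⁻¹) + log L) := by
  set c := 1 + (log (log 3) ^ 3)⁻¹
  have hl₀ : 0 < log (log 3) := log_pos one_lt_log_three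
  have hL1 : 1 ≤ L := one_lt_log_three.le.trans hL
  have hc : 1 ≤ c := by simp only [c]; linarith [inv_pos.2 (pow_pos hl₀ 3)]
  have hzc : L / log L ^ 3 ≤ c * L :=
    calc L / log L ^ 3 ≤ L / log (log 3) ^ 3 := by gcongr
      _ ≤ c * L := by rw [div_eq_mul_inv, mul_comm]; gcongr; linarith
  calc _ ≤ ∑ p ∈ Nat.primesLE ⌊exp (c * L)⌋₊, (1 : ℝ) / p :=
        sum_le_sum_of_subset_of_nonneg (Nat.primesLE_mono (Nat.floor_mono (exp_le_exp.2 hzc)))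
          fun _ _ _ => by positivity
    _ ≤ 4 * (2 + log (log (exp (c * L)))) :=
        sum_primesLE_floor_one_div_le (exp_le_exp.2 (one_le_mul_of_one_le_of_one_le hc hL1))
    _ = 4 * (2 + log c + log L) := by rw [log_exp, log_mul (by linarith) (by linarith)]; ring

theorem stmt4_general (A : ℝ) :
    ∃ C : ℝ, 0 < C ∧ ∀ X : ℝ, 3 ≤ X →
      (∑ e ∈ (Finset.range (⌊Real.exp (Real.log X / Real.log (Real.log X)) *
            Real.exp (Real.log X / (Real.log (Real.log X)) ^ 3)⌋₊ + 1)).filter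
          (fun (e : ℕ) => Squarefree e ∧
            (∀ p ∈ e.primeFactors,
              (p : ℝ) < Real.exp (Real.log X / (Real.log (Real.log X)) ^ 3)) ∧
            Real.exp (Real.log X / Real.log (Real.log X)) < (e : ℝ) ∧
            (e : ℝ) ≤ Real.exp (Real.log X / Real.log (Real.log X)) *
              Real.exp (Real.log X / (Real.log (Real.log X)) ^ 3)),
        (dk 3 e : ℝ) / e) ≤ C * Real.log X ^ (-A) := by
  set c := 1 + (log (log 3) ^ 3)⁻¹
  refine ⟨exp (72 + 36 * log c + (36 + A) ^ 2 / 4), exp_pos _, fun X hX => ?_⟩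
  set L := log X
  set l := log L
  have hL3 : log 3 ≤ L := log_le_log three_pos hX
  have hL : 1 < L := one_lt_log_three.trans_le hL3
  have hl : 0 < l := log_pos hL
  have hz : 1 < exp (L / l ^ 3) := one_lt_exp_iff.2 (div_pos (by linarith) (pow_pos hl 3))
  refine (sum_dk_div_le_exp 3 hz (exp_pos (L / l)) fun e he => ?_).trans ?_
  · obtain ⟨-, hsq, hsm, hDe, -⟩ := mem_filter.1 he
    exact ⟨hsq, fun p hp => (hsm p hp).le, hDe.le⟩
  have hexponent : log (exp (L / l)) / log (exp (L / l ^ 3)) = l ^ 2 := by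
    rw [log_exp, log_exp]; field_simp
  have hprimes : (3 : ℕ) * exp 1 * ∑ p ∈ Nat.primesLE ⌊exp (L / l ^ 3)⌋₊, (1 : ℝ) / p ≤
      9 * (4 * (2 + log c + l)) := by
    gcongr
    · push_cast; linarith [exp_one_lt_d9]
    · exact sum_primesLE_floor_exp_div_log_pow_le hL3
  rw [hexponent, rpow_def_of_pos (by linarith), mul_comm _ (-A), ← exp_add, exp_le_exp]
  nlinarith [sq_nonneg (l - (36 + A) / 2)]

/-- Rankin's trick estimate: summing `d₃(e)/e` over squarefree `z₀`-smooth integers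
`e ∈ (D, D z₀]` gives `≪_A (log X)^{-A}`. -/
theorem stmt4 (A : ℝ) (hA : 0 < A) :
    ∃ C : ℝ, 0 < C ∧ ∀ X : ℝ, 3 ≤ X →
      (∑ e ∈ (Finset.range (⌊Real.exp (Real.log X / Real.log (Real.log X)) *
            Real.exp (Real.log X / (Real.log (Real.log X)) ^ 3)⌋₊ + 1)).filter
          (fun (e : ℕ) => Squarefree e ∧
            (∀ p ∈ e.primeFactors,
              (p : ℝ) < Real.exp (Real.log X / (Real.log (Real.log X)) ^ 3)) ∧
            Real.exp (Real.log X / Real.log (Real.log X)) < (e : ℝ) ∧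
            (e : ℝ) ≤ Real.exp (Real.log X / Real.log (Real.log X)) *
              Real.exp (Real.log X / (Real.log (Real.log X)) ^ 3)),
        (dk 3 e : ℝ) / e) ≤ C * Real.log X ^ (-A) :=
  stmt4_general A
end

section
/- Let X be sufficiently large, z = X^{2/11}, and let n ∈ [2√X, 3X]. Define ρ⁻(n) = ρ(n,z) − Σ_{n=qm, z≤q<2√X} ρ(m,z) + Σ_{n=q₁q₂m, z≤q₂<q₁<X^{1/4−2ε}, q₁q₂⁴<X^{1−2ε}} ρ(m,z) − Σ_{n=q₁q₂q₃m, z≤q₃<q₂<q₁<X^{1/4−2ε}, q₁q₂⁴<X^{1−2ε}} ρ(m,z), where q, q₁, q₂, q₃ range over primes and ρ(k,y)=1_{gcd(k,P(y))=1}. Then ρ⁻(n) ≤ 1 if n is prime and ρ⁻(n) ≤ 0 if n is not prime; i.e., ρ⁻(n) ≤ 1_{ℙ}(n). -/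
open Finset

/-- Product of all primes below `y`. -/
noncomputable def primorialBelow (y : ℝ) : ℕ :=
  ∏ p ∈ (Finset.range (Nat.ceil y + 1)).filter (fun (p : ℕ) => p.Prime ∧ (p : ℝ) < y), p

/-- Indicator that `n` has no prime factor below `y`. -/
noncomputable def rhoInd (n : ℕ) (y : ℝ) : ℤ :=
  if Nat.Coprime n (primorialBelow y) then 1 else 0

/-- The sieve minorant `ρ⁻(n)` obtained from two double applications of Buchstab's
identity with `z = X^{2/11}`, discarding two nonnegative terms. -/
noncomputable def rhoMinus (X ε : ℝ) (n : ℕ) : ℤ :=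
  rhoInd n (X ^ ((2 : ℝ)/11))
  - ∑ q ∈ n.divisors.filter
      (fun (q : ℕ) => q.Prime ∧ X ^ ((2 : ℝ)/11) ≤ (q : ℝ) ∧ (q : ℝ) < 2 * Real.sqrt X),
      rhoInd (n / q) (X ^ ((2 : ℝ)/11))
  + ∑ q₁ ∈ n.divisors.filter (fun (q : ℕ) => q.Prime),
      ∑ q₂ ∈ (n / q₁).divisors.filter
        (fun (q₂ : ℕ) => q₂.Prime ∧ X ^ ((2 : ℝ)/11) ≤ (q₂ : ℝ) ∧ q₂ < q₁ ∧
          (q₁ : ℝ) < X ^ ((1 : ℝ)/4 - 2*ε) ∧ (q₁ : ℝ) * (q₂ : ℝ) ^ 4 < X ^ (1 - 2*ε)),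
        rhoInd (n / (q₁ * q₂)) (X ^ ((2 : ℝ)/11))
  - ∑ q₁ ∈ n.divisors.filter (fun (q : ℕ) => q.Prime),
      ∑ q₂ ∈ (n / q₁).divisors.filter (fun (q₂ : ℕ) => q₂.Prime ∧ q₂ < q₁),
        ∑ q₃ ∈ (n / (q₁ * q₂)).divisors.filter
          (fun (q₃ : ℕ) => q₃.Prime ∧ X ^ ((2 : ℝ)/11) ≤ (q₃ : ℝ) ∧ q₃ < q₂ ∧
            (q₁ : ℝ) < X ^ ((1 : ℝ)/4 - 2*ε) ∧ (q₁ : ℝ) * (q₂ : ℝ) ^ 4 < X ^ (1 - 2*ε)),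
          rhoInd (n / (q₁ * q₂ * q₃)) (X ^ ((2 : ℝ)/11))

/- ### Auxiliary definitions and lemmas -/

/-- `n` has no prime factor below `y`. -/
def Rough (y : ℝ) (n : ℕ) : Prop := ∀ p : ℕ, p.Prime → p ∣ n → y ≤ (p : ℝ)

lemma rhoInd_nonneg (n : ℕ) (y : ℝ) : 0 ≤ rhoInd n y := by
  unfold rhoInd; split <;> norm_num

lemma rhoInd_le_one (n : ℕ) (y : ℝ) : rhoInd n y ≤ 1 := by
  unfold rhoInd; split <;> norm_num

lemma coprime_primorial_iff (n : ℕ) (y : ℝ) :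
    Nat.Coprime n (primorialBelow y) ↔ Rough y n := by
  unfold primorialBelow
  rw [Nat.coprime_prod_right_iff]
  constructor
  · intro h p hp hpn
    by_contra hlt
    push_neg at hlt
    have hmem : p ∈ (Finset.range (Nat.ceil y + 1)).filter
        (fun (p : ℕ) => p.Prime ∧ (p : ℝ) < y) := by
      simp only [Finset.mem_filter, Finset.mem_range]
      refine ⟨?_, hp, hlt⟩
      have : (p : ℝ) < (Nat.ceil y : ℝ) + 1 := lt_of_lt_of_le hlt (by
        have := Nat.le_ceil y; linarith)
      have : p < Nat.ceil y + 1 := by exact_mod_cast this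
      omega
    have hcop := h p hmem
    exact hp.one_lt.ne' (Nat.Coprime.eq_one_of_dvd hcop.symm hpn)
  · intro h p hmem
    simp only [Finset.mem_filter, Finset.mem_range] at hmem
    obtain ⟨-, hp, hpy⟩ := hmem
    rw [Nat.coprime_comm]
    exact (Nat.Prime.coprime_iff_not_dvd hp).mpr (fun hd => absurd (h p hp hd) (by linarith))

lemma rhoInd_eq_one_iff (n : ℕ) (y : ℝ) : rhoInd n y = 1 ↔ Rough y n := by
  rw [rhoInd, ← coprime_primorial_iff]
  by_cases h : Nat.Coprime n (primorialBelow y)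
  · rw [if_pos h]; exact iff_of_true rfl h
  · rw [if_neg h]; exact iff_of_false (by norm_num) h

lemma rhoInd_eq_zero {n : ℕ} {y : ℝ} (h : ¬ Rough y n) : rhoInd n y = 0 := by
  rw [rhoInd, if_neg (fun hc => h ((coprime_primorial_iff n y).mp hc))]

lemma rough_of_dvd {y : ℝ} {m n : ℕ} (hd : m ∣ n) (h : Rough y n) : Rough y m :=
  fun p hp hpm => h p hp (hpm.trans hd)

noncomputable def Ssum (X : ℝ) (n : ℕ) : ℤ :=
  ∑ q ∈ n.divisors.filter
      (fun (q : ℕ) => q.Prime ∧ X ^ ((2 : ℝ)/11) ≤ (q : ℝ) ∧ (q : ℝ) < 2 * Real.sqrt X),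
      rhoInd (n / q) (X ^ ((2 : ℝ)/11))

noncomputable def Aset (X ε : ℝ) (n q₁ : ℕ) : Finset ℕ :=
  (n / q₁).divisors.filter
    (fun (q₂ : ℕ) => q₂.Prime ∧ X ^ ((2 : ℝ)/11) ≤ (q₂ : ℝ) ∧ q₂ < q₁ ∧
      (q₁ : ℝ) < X ^ ((1 : ℝ)/4 - 2*ε) ∧ (q₁ : ℝ) * (q₂ : ℝ) ^ 4 < X ^ (1 - 2*ε))

noncomputable def Cset (X ε : ℝ) (n q₁ q₂ : ℕ) : Finset ℕ :=
  (n / (q₁ * q₂)).divisors.filter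
    (fun (q₃ : ℕ) => q₃.Prime ∧ X ^ ((2 : ℝ)/11) ≤ (q₃ : ℝ) ∧ q₃ < q₂ ∧
      (q₁ : ℝ) < X ^ ((1 : ℝ)/4 - 2*ε) ∧ (q₁ : ℝ) * (q₂ : ℝ) ^ 4 < X ^ (1 - 2*ε))

noncomputable def Dsum (X ε : ℝ) (n : ℕ) : ℤ :=
  ∑ q₁ ∈ n.divisors.filter (fun (q : ℕ) => q.Prime),
    ∑ q₂ ∈ Aset X ε n q₁, rhoInd (n / (q₁ * q₂)) (X ^ ((2 : ℝ)/11))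

noncomputable def Tsum (X ε : ℝ) (n : ℕ) : ℤ :=
  ∑ q₁ ∈ n.divisors.filter (fun (q : ℕ) => q.Prime),
    ∑ q₂ ∈ (n / q₁).divisors.filter (fun (q₂ : ℕ) => q₂.Prime ∧ q₂ < q₁),
      ∑ q₃ ∈ Cset X ε n q₁ q₂, rhoInd (n / (q₁ * q₂ * q₃)) (X ^ ((2 : ℝ)/11))

lemma rhoMinus_eq (X ε : ℝ) (n : ℕ) :
    rhoMinus X ε n
      = rhoInd n (X ^ ((2 : ℝ)/11)) - Ssum X n + Dsum X ε n - Tsum X ε n := rfl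

/-- The sieve function `ρ⁻` is a minorant of the indicator of the primes on `[2√X, 3X]`. -/
theorem stmt6 :
    ∃ X₀ : ℝ, ∀ X : ℝ, X₀ ≤ X → ∀ ε : ℝ, 0 < ε → ε < 1/100 → ∀ n : ℕ,
      2 * Real.sqrt X ≤ (n : ℝ) → (n : ℝ) ≤ 3 * X →
      rhoMinus X ε n ≤ (if n.Prime then 1 else 0) := by
  refine ⟨2, ?_⟩
  intro X hX ε hε hε100 n hnlo hnhi
  have hX0 : (0:ℝ) < X := by linarith
  have hX1 : (1:ℝ) ≤ X := by linarith
  have hsX1 : (1:ℝ) ≤ Real.sqrt X := by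
    rw [show (1:ℝ) = Real.sqrt 1 by simp]
    exact Real.sqrt_le_sqrt hX1
  have hn2 : 2 ≤ n := by
    have h2 : (2:ℝ) ≤ (n:ℝ) := le_trans (by linarith) hnlo
    exact_mod_cast h2
  have hn0 : n ≠ 0 := by omega
  rw [rhoMinus_eq]
  by_cases hp : n.Prime
  · -- prime case : the double and triple sums vanish
    rw [if_pos hp]
    have hD : Dsum X ε n = 0 := by
      rw [Dsum]
      apply Finset.sum_eq_zero
      intro q₁ hq₁
      rw [Finset.mem_filter, Nat.mem_divisors] at hq₁
      have hq₁n : q₁ = n := (hp.eq_one_or_self_of_dvd q₁ hq₁.1.1).resolve_left hq₁.2.ne_one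
      apply Finset.sum_eq_zero
      intro q₂ hq₂
      rw [Aset, Finset.mem_filter, Nat.mem_divisors, hq₁n, Nat.div_self hp.pos] at hq₂
      exact absurd ((Nat.dvd_one.mp hq₂.1.1) ▸ hq₂.2.1) Nat.not_prime_one
    have hT : Tsum X ε n = 0 := by
      rw [Tsum]
      apply Finset.sum_eq_zero
      intro q₁ hq₁
      rw [Finset.mem_filter, Nat.mem_divisors] at hq₁
      have hq₁n : q₁ = n := (hp.eq_one_or_self_of_dvd q₁ hq₁.1.1).resolve_left hq₁.2.ne_one
      apply Finset.sum_eq_zero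
      intro q₂ hq₂
      rw [Finset.mem_filter, Nat.mem_divisors, hq₁n, Nat.div_self hp.pos] at hq₂
      exact absurd ((Nat.dvd_one.mp hq₂.1.1) ▸ hq₂.2.1) Nat.not_prime_one
    have hS : 0 ≤ Ssum X n :=
      Finset.sum_nonneg fun q _ => rhoInd_nonneg _ _
    have hA := rhoInd_le_one n (X ^ ((2 : ℝ)/11))
    linarith
  · rw [if_neg hp]
    by_cases hr : Rough (X ^ ((2 : ℝ)/11)) n
    · -- main case : n composite with all prime factors ≥ z
      have hA : rhoInd n (X ^ ((2 : ℝ)/11)) = 1 := (rhoInd_eq_one_iff _ _).mpr hr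
      have hpp : (n.minFac).Prime := Nat.minFac_prime (by omega)
      set p := n.minFac with hpdef
      have hpd : p ∣ n := Nat.minFac_dvd n
      have hpz : X ^ ((2 : ℝ)/11) ≤ (p:ℝ) := hr p hpp hpd
      have hpsq : p ^ 2 ≤ n := Nat.minFac_sq_le_self (by omega) hp
      have hp2X : (p:ℝ) < 2 * Real.sqrt X := by
        have h1 : ((p:ℝ)) ^ 2 ≤ (n:ℝ) := by exact_mod_cast hpsq
        have h4 : ((2:ℝ) * Real.sqrt X) ^ 2 = 4 * X := by
          rw [mul_pow, Real.sq_sqrt hX0.le]; ring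
        refine lt_of_pow_lt_pow_left₀ 2 (by positivity) ?_
        rw [h4]; linarith
      have hXq : X ^ ((1:ℝ)/4 - 2*ε) < 2 * Real.sqrt X := by
        have h1 : X ^ ((1:ℝ)/4 - 2*ε) ≤ X ^ ((1:ℝ)/2) :=
          Real.rpow_le_rpow_of_exponent_le hX1 (by linarith)
        have h2 : Real.sqrt X = X ^ ((1:ℝ)/2) := Real.sqrt_eq_rpow X
        linarith
      have hpF1 : p ∈ n.divisors.filter
          (fun (q : ℕ) => q.Prime ∧ X ^ ((2 : ℝ)/11) ≤ (q : ℝ) ∧ (q : ℝ) < 2 * Real.sqrt X) := by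
        rw [Finset.mem_filter, Nat.mem_divisors]
        exact ⟨⟨hpd, hn0⟩, hpp, hpz, hp2X⟩
      have hS : Ssum X n = ((n.divisors.filter
          (fun (q : ℕ) => q.Prime ∧ X ^ ((2 : ℝ)/11) ≤ (q : ℝ) ∧
            (q : ℝ) < 2 * Real.sqrt X)).card : ℤ) := by
        have h1 : ∀ q ∈ n.divisors.filter
            (fun (q : ℕ) => q.Prime ∧ X ^ ((2 : ℝ)/11) ≤ (q : ℝ) ∧
              (q : ℝ) < 2 * Real.sqrt X),
            rhoInd (n / q) (X ^ ((2 : ℝ)/11)) = 1 := by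
          intro q hq
          rw [Finset.mem_filter, Nat.mem_divisors] at hq
          exact (rhoInd_eq_one_iff _ _).mpr (rough_of_dvd (Nat.div_dvd_of_dvd hq.1.1) hr)
        rw [Ssum, Finset.sum_congr rfl h1, Finset.sum_const, nsmul_eq_mul, mul_one]
      -- pointwise key inequality
      have key : ∀ q₁ ∈ n.divisors.filter (fun (q : ℕ) => q.Prime),
          (∑ q₂ ∈ Aset X ε n q₁, rhoInd (n / (q₁ * q₂)) (X ^ ((2 : ℝ)/11)))
          ≤ (∑ q₂ ∈ (n / q₁).divisors.filter (fun (q₂ : ℕ) => q₂.Prime ∧ q₂ < q₁),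
              ∑ q₃ ∈ Cset X ε n q₁ q₂, rhoInd (n / (q₁ * q₂ * q₃)) (X ^ ((2 : ℝ)/11)))
            + (if p ∈ Aset X ε n q₁ then 1 else 0) := by
        intro q₁ hq₁
        rw [Finset.mem_filter, Nat.mem_divisors] at hq₁
        obtain ⟨⟨hq₁d, -⟩, hq₁p⟩ := hq₁
        have hterm : ∀ q₂ ∈ Aset X ε n q₁,
            rhoInd (n / (q₁ * q₂)) (X ^ ((2 : ℝ)/11)) = 1 := by
          intro q₂ hq₂
          rw [Aset, Finset.mem_filter, Nat.mem_divisors] at hq₂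
          have h12 : q₁ * q₂ ∣ n := (Nat.dvd_div_iff_mul_dvd hq₁d).mp hq₂.1.1
          exact (rhoInd_eq_one_iff _ _).mpr (rough_of_dvd (Nat.div_dvd_of_dvd h12) hr)
        rw [Finset.sum_congr rfl hterm, Finset.sum_const, nsmul_eq_mul, mul_one]
        have hmid : ((((Aset X ε n q₁).erase p).card : ℤ))
            ≤ ∑ q₂ ∈ (n / q₁).divisors.filter (fun (q₂ : ℕ) => q₂.Prime ∧ q₂ < q₁),
              ∑ q₃ ∈ Cset X ε n q₁ q₂, rhoInd (n / (q₁ * q₂ * q₃)) (X ^ ((2 : ℝ)/11)) := by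
          have hsub : (Aset X ε n q₁).erase p ⊆
              (n / q₁).divisors.filter (fun (q₂ : ℕ) => q₂.Prime ∧ q₂ < q₁) := by
            intro q₂ hq₂
            have hq₂' := Finset.mem_of_mem_erase hq₂
            rw [Aset, Finset.mem_filter] at hq₂'
            rw [Finset.mem_filter]
            exact ⟨hq₂'.1, hq₂'.2.1, hq₂'.2.2.2.1⟩
          calc (((Aset X ε n q₁).erase p).card : ℤ)
              = ∑ _q₂ ∈ (Aset X ε n q₁).erase p, (1:ℤ) := by
                rw [Finset.sum_const, nsmul_eq_mul, mul_one]
            _ ≤ ∑ q₂ ∈ (Aset X ε n q₁).erase p,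
                  ∑ q₃ ∈ Cset X ε n q₁ q₂,
                    rhoInd (n / (q₁ * q₂ * q₃)) (X ^ ((2 : ℝ)/11)) := by
                apply Finset.sum_le_sum
                intro q₂ hq₂
                have hq₂ne : q₂ ≠ p := Finset.ne_of_mem_erase hq₂
                have hq₂A := Finset.mem_of_mem_erase hq₂
                rw [Aset, Finset.mem_filter, Nat.mem_divisors] at hq₂A
                obtain ⟨⟨hq₂d, -⟩, hq₂p, hq₂z, hq₂lt, hc1, hc2⟩ := hq₂A
                have hq₂n : q₂ ∣ n := hq₂d.trans (Nat.div_dvd_of_dvd hq₁d)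
                have h12 : q₁ * q₂ ∣ n := (Nat.dvd_div_iff_mul_dvd hq₁d).mp hq₂d
                have hple : p ≤ q₂ := Nat.minFac_le_of_dvd hq₂p.two_le hq₂n
                have hplt : p < q₂ := lt_of_le_of_ne hple (Ne.symm hq₂ne)
                have hpltq₁ : p < q₁ := hplt.trans hq₂lt
                have hcop : Nat.Coprime (q₁ * q₂) p :=
                  Nat.Coprime.mul
                    ((Nat.coprime_primes hq₁p hpp).mpr hpltq₁.ne')
                    ((Nat.coprime_primes hq₂p hpp).mpr hplt.ne')
                have h123 : q₁ * q₂ * p ∣ n := hcop.mul_dvd_of_dvd_of_dvd h12 hpd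
                have hpmem : p ∈ Cset X ε n q₁ q₂ := by
                  rw [Cset, Finset.mem_filter, Nat.mem_divisors]
                  refine ⟨⟨(Nat.dvd_div_iff_mul_dvd h12).mpr h123, ?_⟩,
                    hpp, hpz, hplt, hc1, hc2⟩
                  have h0 : 0 < n / (q₁ * q₂) :=
                    Nat.div_pos (Nat.le_of_dvd (by omega) h12)
                      (Nat.mul_pos hq₁p.pos hq₂p.pos)
                  omega
                have hval : rhoInd (n / (q₁ * q₂ * p)) (X ^ ((2 : ℝ)/11)) = 1 :=
                  (rhoInd_eq_one_iff _ _).mpr (rough_of_dvd (Nat.div_dvd_of_dvd h123) hr)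
                calc (1:ℤ) = rhoInd (n / (q₁ * q₂ * p)) (X ^ ((2 : ℝ)/11)) := hval.symm
                  _ ≤ ∑ q₃ ∈ Cset X ε n q₁ q₂,
                        rhoInd (n / (q₁ * q₂ * q₃)) (X ^ ((2 : ℝ)/11)) :=
                    Finset.single_le_sum (fun i _ => rhoInd_nonneg _ _) hpmem
            _ ≤ ∑ q₂ ∈ (n / q₁).divisors.filter (fun (q₂ : ℕ) => q₂.Prime ∧ q₂ < q₁),
                  ∑ q₃ ∈ Cset X ε n q₁ q₂,
                    rhoInd (n / (q₁ * q₂ * q₃)) (X ^ ((2 : ℝ)/11)) :=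
                Finset.sum_le_sum_of_subset_of_nonneg hsub
                  (fun i _ _ => Finset.sum_nonneg fun j _ => rhoInd_nonneg _ _)
        by_cases hpA : p ∈ Aset X ε n q₁
        · rw [if_pos hpA]
          have hce : ((Aset X ε n q₁).erase p).card = (Aset X ε n q₁).card - 1 :=
            Finset.card_erase_of_mem hpA
          have hcpos : 0 < (Aset X ε n q₁).card := Finset.card_pos.mpr ⟨p, hpA⟩
          have hle : ((Aset X ε n q₁).card : ℤ)
              ≤ (((Aset X ε n q₁).erase p).card : ℤ) + 1 := by
            rw [hce]; omega
          linarith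
        · rw [if_neg hpA]
          rw [Finset.erase_eq_of_notMem hpA] at hmid
          linarith
      have hD : Dsum X ε n ≤ Tsum X ε n +
          ∑ q₁ ∈ n.divisors.filter (fun (q : ℕ) => q.Prime),
            (if p ∈ Aset X ε n q₁ then (1:ℤ) else 0) := by
        rw [Dsum, Tsum, ← Finset.sum_add_distrib]
        exact Finset.sum_le_sum key
      have hc : ∑ q₁ ∈ n.divisors.filter (fun (q : ℕ) => q.Prime),
            (if p ∈ Aset X ε n q₁ then (1:ℤ) else 0)
          = (((n.divisors.filter (fun (q : ℕ) => q.Prime)).filter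
              (fun q₁ => p ∈ Aset X ε n q₁)).card : ℤ) := by
        rw [Finset.sum_boole]
      have hsub2 : (n.divisors.filter (fun (q : ℕ) => q.Prime)).filter
            (fun q₁ => p ∈ Aset X ε n q₁)
          ⊆ (n.divisors.filter
            (fun (q : ℕ) => q.Prime ∧ X ^ ((2 : ℝ)/11) ≤ (q : ℝ) ∧
              (q : ℝ) < 2 * Real.sqrt X)).erase p := by
        intro q₁ hq₁
        rw [Finset.mem_filter, Finset.mem_filter] at hq₁
        obtain ⟨⟨hq₁div, hq₁p⟩, hpA⟩ := hq₁
        rw [Aset, Finset.mem_filter] at hpA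
        obtain ⟨-, -, -, hpq₁, hq₁X, -⟩ := hpA
        rw [Finset.mem_erase, Finset.mem_filter]
        refine ⟨hpq₁.ne', hq₁div, hq₁p, ?_, lt_trans hq₁X hXq⟩
        have hcast : (p:ℝ) < (q₁:ℝ) := by exact_mod_cast hpq₁
        linarith
      have hcard := Finset.card_le_card hsub2
      rw [Finset.card_erase_of_mem hpF1] at hcard
      have hF1pos : 0 < (n.divisors.filter
          (fun (q : ℕ) => q.Prime ∧ X ^ ((2 : ℝ)/11) ≤ (q : ℝ) ∧
            (q : ℝ) < 2 * Real.sqrt X)).card := Finset.card_pos.mpr ⟨p, hpF1⟩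
      have hcardZ : ((((n.divisors.filter (fun (q : ℕ) => q.Prime)).filter
              (fun q₁ => p ∈ Aset X ε n q₁)).card : ℤ)) + 1
          ≤ ((n.divisors.filter
            (fun (q : ℕ) => q.Prime ∧ X ^ ((2 : ℝ)/11) ≤ (q : ℝ) ∧
              (q : ℝ) < 2 * Real.sqrt X)).card : ℤ) := by
        omega
      linarith
    · -- n has a prime factor below z
      have hA : rhoInd n (X ^ ((2 : ℝ)/11)) = 0 := rhoInd_eq_zero hr
      have hS : 0 ≤ Ssum X n := Finset.sum_nonneg fun q _ => rhoInd_nonneg _ _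
      have hT : 0 ≤ Tsum X ε n :=
        Finset.sum_nonneg fun q₁ _ => Finset.sum_nonneg fun q₂ _ =>
          Finset.sum_nonneg fun q₃ _ => rhoInd_nonneg _ _
      have hD : Dsum X ε n = 0 := by
        rw [Dsum]
        apply Finset.sum_eq_zero
        intro q₁ hq₁
        rw [Finset.mem_filter, Nat.mem_divisors] at hq₁
        obtain ⟨⟨hq₁d, -⟩, hq₁p⟩ := hq₁
        apply Finset.sum_eq_zero
        intro q₂ hq₂
        rw [Aset, Finset.mem_filter, Nat.mem_divisors] at hq₂
        obtain ⟨⟨hq₂d, -⟩, hq₂p, hq₂z, hq₂lt, -, -⟩ := hq₂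
        have h12 : q₁ * q₂ ∣ n := (Nat.dvd_div_iff_mul_dvd hq₁d).mp hq₂d
        apply rhoInd_eq_zero
        intro hrm
        apply hr
        intro r hrp hrd
        have heq : q₁ * q₂ * (n / (q₁ * q₂)) = n := Nat.mul_div_cancel' h12
        rw [← heq] at hrd
        rcases (Nat.Prime.dvd_mul hrp).mp hrd with h | h
        · rcases (Nat.Prime.dvd_mul hrp).mp h with h' | h'
          · have hre : r = q₁ := (Nat.prime_dvd_prime_iff_eq hrp hq₁p).mp h'
            subst hre
            have hlt : (q₂:ℝ) ≤ (r:ℝ) := by exact_mod_cast hq₂lt.le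
            linarith
          · have hre : r = q₂ := (Nat.prime_dvd_prime_iff_eq hrp hq₂p).mp h'
            subst hre; exact hq₂z
        · exact hrm r hrp h
      linarith
end

section
/- Let T ≥ 1 and N > T ≥ |t| > 0, and N < N' ≤ 2N. Then |Σ_{N < n ≤ N'} n^{−1−it}| ≪ 1/|t|, with an absolute implied constant. -/
/-!
Kusmin–Landau via summation by parts. Put `z = -1 - it` and `ℓₙ = log (n + 1) - log n`, so that
`(n + 1)^z = n^z e^{z ℓₙ}`; hence `n^z = ((n + 1)^z - n^z) dₙ` with `dₙ = (e^{z ℓₙ} - 1)⁻¹`, and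
Abel summation turns the sum into two boundary terms plus `∑ (n + 1)^z (dₙ - dₙ₊₁)`.
Since `|t| ℓₙ ≤ |t| / n ≤ 1`, Jordan's inequality gives `|Im (e^{z ℓₙ} - 1)| ≫ |t| / n`,
so `|dₙ| ≪ n / |t|`; and
`|dₙ - dₙ₊₁| ≤ |z| |ℓₙ - ℓₙ₊₁| |dₙ dₙ₊₁| ≪ |z| / t² · (1 / ℓₙ₊₁ - 1 / ℓₙ) ≪ 1 / |t|`.
As `|n^z| = 1 / n ≤ 1 / N` and there are at most `N` terms, the sum is `≪ 1 / |t|`;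
for `|t| ≤ 1` the trivial bound `1` suffices.
-/

open Finset

open Complex in
theorem Complex.norm_exp_sub_exp_le_of_re_nonpos {a b : ℂ} (ha : a.re ≤ 0) (hb : b.re ≤ 0) :
    ‖exp a - exp b‖ ≤ ‖a - b‖ := by
  simpa using (convex_halfSpace_re_le (0 : ℝ)).norm_image_sub_le_of_norm_deriv_le
    (C := 1) (fun z _ => differentiableAt_exp) (fun z hz => by simpa [norm_exp] using hz) hb ha

theorem sum_Ioc_sub_mul_eq {R : Type*} [Ring R] (u d : ℕ → R) {a b : ℕ} (hab : a < b) :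
    ∑ n ∈ Ioc a b, (u (n + 1) - u n) * d n
      = u (b + 1) * d b - u (a + 1) * d (a + 1)
        + ∑ n ∈ Ico (a + 1) b, u (n + 1) * (d n - d (n + 1)) := by
  induction b, hab using Nat.le_induction with
  | base => simp [sub_mul]
  | succ b hab ih =>
    rw [sum_Ioc_succ_top (by omega), ih, sum_Ico_succ_top hab]
    noncomm_ring

theorem norm_sum_Ioc_le_of_eq_sub_mul {R : Type*} [NormedRing R] {u d : ℕ → R} {a b : ℕ}
    (hab : a < b) {U D Δ : ℝ} (hu : ∀ n ∈ Ioc a b, u n = (u (n + 1) - u n) * d n)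
    (hU : ∀ n ∈ Ioc a (b + 1), ‖u n‖ ≤ U) (hD : ∀ n ∈ Ioc a b, ‖d n‖ ≤ D)
    (hΔ : ∀ n ∈ Ico (a + 1) b, ‖d n - d (n + 1)‖ ≤ Δ) :
    ‖∑ n ∈ Ioc a b, u n‖ ≤ 2 * (U * D) + (b - a - 1 : ℕ) * (U * Δ) := by
  have hU0 : 0 ≤ U := (norm_nonneg _).trans (hU (a + 1) (by simp; omega))
  have hD0 : 0 ≤ D := (norm_nonneg _).trans (hD b (by simp; omega))
  have hprod : ∀ m ∈ Ioc a (b + 1), ∀ n ∈ Ioc a b, ‖u m * d n‖ ≤ U * D := fun m hm n hn =>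
    (norm_mul_le _ _).trans (mul_le_mul (hU m hm) (hD n hn) (norm_nonneg _) hU0)
  have hsum : ‖∑ n ∈ Ico (a + 1) b, u (n + 1) * (d n - d (n + 1))‖
      ≤ (b - a - 1 : ℕ) * (U * Δ) := by
    refine (norm_sum_le _ _).trans ((sum_le_card_nsmul _ _ (U * Δ) fun n hn => ?_).trans_eq ?_)
    · rw [mem_Ico] at hn
      exact (norm_mul_le _ _).trans
        (mul_le_mul (hU _ (by simp; omega)) (hΔ n (by simpa using hn)) (norm_nonneg _) hU0)
    · rw [Nat.card_Ico, nsmul_eq_mul, Nat.sub_sub]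
  rw [sum_congr rfl hu, sum_Ioc_sub_mul_eq u d hab]
  calc _ ≤ ‖u (b + 1) * d b‖ + ‖u (a + 1) * d (a + 1)‖
        + ‖∑ n ∈ Ico (a + 1) b, u (n + 1) * (d n - d (n + 1))‖ :=
        (norm_add_le _ _).trans (by gcongr; exact norm_sub_le _ _)
    _ ≤ U * D + U * D + (b - a - 1 : ℕ) * (U * Δ) := by
        gcongr
        · exact hprod _ (by simp; omega) _ (by simp; omega)
        · exact hprod _ (by simp; omega) _ (by simp; omega)
    _ = _ := by ring

noncomputable def logStep (n : ℕ) : ℝ := Real.log (n + 1) - Real.log n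

section logStep

variable {n : ℕ}

theorem inv_add_one_le_logStep (hn : 0 < n) : ((n : ℝ) + 1)⁻¹ ≤ logStep n := by
  have hn' : (0 : ℝ) < n := by exact_mod_cast hn
  have := Real.one_sub_inv_le_log_of_pos (x := (n + 1) / n) (by positivity)
  rw [Real.log_div (by positivity) hn'.ne', inv_div] at this
  unfold logStep
  convert this using 1
  field_simp
  ring

theorem logStep_le_inv (hn : 0 < n) : logStep n ≤ (n : ℝ)⁻¹ := by
  have hn' : (0 : ℝ) < n := by exact_mod_cast hn
  have := Real.log_le_sub_one_of_pos (x := (n + 1) / n) (by positivity)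
  rw [Real.log_div (by positivity) hn'.ne'] at this
  unfold logStep
  convert this using 1
  field_simp
  ring

theorem logStep_pos (hn : 0 < n) : 0 < logStep n :=
  (inv_pos.mpr (by positivity)).trans_le (inv_add_one_le_logStep hn)

theorem inv_logStep_le (hn : 0 < n) : (logStep n)⁻¹ ≤ n + 1 :=
  inv_le_of_inv_le₀ (by positivity) (inv_add_one_le_logStep hn)

theorem natCast_le_inv_logStep (hn : 0 < n) : (n : ℝ) ≤ (logStep n)⁻¹ :=
  le_inv_of_le_inv₀ (logStep_pos hn) (logStep_le_inv hn)

theorem logStep_le_half (hn : 2 ≤ n) : logStep n ≤ 1 / 2 := by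
  refine (logStep_le_inv (by omega)).trans ?_
  rw [one_div]
  gcongr
  exact_mod_cast hn

theorem abs_mul_logStep_le_one {t : ℝ} (hn : 0 < n) (htn : |t| ≤ n) : |t| * logStep n ≤ 1 := by
  have hn' : (0 : ℝ) < n := by exact_mod_cast hn
  calc |t| * logStep n ≤ n * (n : ℝ)⁻¹ :=
        mul_le_mul htn (logStep_le_inv hn) (logStep_pos hn).le hn'.le
    _ = 1 := mul_inv_cancel₀ hn'.ne'

theorem natCast_add_one_cpow (hn : n ≠ 0) (z : ℂ) :
    ((n + 1 : ℕ) : ℂ) ^ z = (n : ℂ) ^ z * Complex.exp (z * logStep n) := by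
  rw [Complex.cpow_def_of_ne_zero (Nat.cast_ne_zero.mpr hn),
    Complex.cpow_def_of_ne_zero (Nat.cast_ne_zero.mpr n.succ_ne_zero), ← Complex.exp_add,
    ← Complex.natCast_log, ← Complex.natCast_log, logStep]
  push_cast
  ring_nf

end logStep

theorem norm_natCast_cpow_neg_one_sub (n : ℕ) (t : ℝ) :
    ‖(n : ℂ) ^ (-1 - Complex.I * t)‖ = (n : ℝ)⁻¹ := by
  rw [Complex.norm_natCast_cpow_of_re_ne_zero _ (by simp)]
  simp [Real.rpow_neg_one]

theorem mul_div_four_le_norm_exp_sub_one {t x : ℝ} (hx0 : 0 ≤ x) (hx : x ≤ 1 / 2)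
    (htx : |t| * x ≤ 1) : |t| * x / 4 ≤ ‖Complex.exp ((-1 - Complex.I * t) * x) - 1‖ := by
  have him : (Complex.exp ((-1 - Complex.I * t) * x) - 1).im
      = Real.exp (-x) * Real.sin (-(t * x)) := by
    simp [Complex.exp_im, Complex.mul_re, Complex.mul_im]
  have hsin : 2 / Real.pi * |t * x| ≤ |Real.sin (t * x)| := Real.mul_abs_le_abs_sin <| by
    rw [abs_mul, abs_of_nonneg hx0]; linarith [Real.pi_gt_three]
  have hexp : 1 / 2 ≤ Real.exp (-x) := by linarith [Real.add_one_le_exp (-x)]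
  calc |t| * x / 4 = 1 / 4 * |t * x| := by rw [abs_mul, abs_of_nonneg hx0]; ring
    _ ≤ 1 / Real.pi * |t * x| := by
        gcongr; exact Real.pi_lt_four.le
    _ = 1 / 2 * (2 / Real.pi * |t * x|) := by ring
    _ ≤ Real.exp (-x) * |Real.sin (t * x)| := by gcongr
    _ = |(Complex.exp ((-1 - Complex.I * t) * x) - 1).im| := by
        rw [him, abs_mul, abs_of_pos (Real.exp_pos _), Real.sin_neg, abs_neg]
    _ ≤ _ := Complex.abs_im_le_norm _

noncomputable def abelWeight (t x : ℝ) : ℂ := (Complex.exp ((-1 - Complex.I * t) * x) - 1)⁻¹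

section abelWeight

variable {t x y : ℝ}

theorem exp_mul_sub_one_ne_zero (ht : t ≠ 0) (hx0 : 0 < x) (hx : x ≤ 1 / 2)
    (htx : |t| * x ≤ 1) : Complex.exp ((-1 - Complex.I * t) * x) - 1 ≠ 0 :=
  norm_pos_iff.mp <|
    lt_of_lt_of_le (by positivity) (mul_div_four_le_norm_exp_sub_one hx0.le hx htx)

theorem norm_abelWeight_le (ht : t ≠ 0) (hx0 : 0 < x) (hx : x ≤ 1 / 2) (htx : |t| * x ≤ 1) :
    ‖abelWeight t x‖ ≤ 4 / (|t| * x) := by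
  rw [abelWeight, norm_inv, ← inv_div]
  exact inv_anti₀ (by positivity) (mul_div_four_le_norm_exp_sub_one hx0.le hx htx)

theorem norm_abelWeight_sub_le (ht : t ≠ 0) (hx0 : 0 < x) (hx : x ≤ 1 / 2) (htx : |t| * x ≤ 1)
    (hy0 : 0 < y) (hy : y ≤ 1 / 2) (hty : |t| * y ≤ 1) :
    ‖abelWeight t x - abelWeight t y‖ ≤ 16 * (1 + |t|) / t ^ 2 * |x⁻¹ - y⁻¹| := by
  set z : ℂ := -1 - Complex.I * t
  have hA := exp_mul_sub_one_ne_zero ht hx0 hx htx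
  have hB := exp_mul_sub_one_ne_zero ht hy0 hy hty
  have hdiff : abelWeight t x - abelWeight t y
      = (Complex.exp (z * y) - Complex.exp (z * x)) * (abelWeight t x * abelWeight t y) := by
    simp only [abelWeight, z]
    field_simp
    ring
  have hre : ∀ w : ℝ, 0 ≤ w → (z * w).re ≤ 0 := fun w hw => by
    simpa [z, Complex.mul_re] using hw
  have hz : ‖z‖ ≤ 1 + |t| := by
    refine (norm_sub_le _ _).trans ?_
    simp
  have hnum : ‖Complex.exp (z * y) - Complex.exp (z * x)‖ ≤ (1 + |t|) * |x - y| := by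
    refine (Complex.norm_exp_sub_exp_le_of_re_nonpos (hre y hy0.le) (hre x hx0.le)).trans ?_
    rw [← mul_sub, norm_mul, ← Complex.ofReal_sub, Complex.norm_real, Real.norm_eq_abs,
      abs_sub_comm]
    gcongr
  calc ‖abelWeight t x - abelWeight t y‖
      ≤ (1 + |t|) * |x - y| * (4 / (|t| * x) * (4 / (|t| * y))) := by
        rw [hdiff, norm_mul, norm_mul]
        gcongr
        · exact norm_abelWeight_le ht hx0 hx htx
        · exact norm_abelWeight_le ht hy0 hy hty
    _ = 16 * (1 + |t|) / t ^ 2 * |x⁻¹ - y⁻¹| := by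
        rw [inv_sub_inv hx0.ne' hy0.ne', abs_div, abs_of_pos (mul_pos hx0 hy0), abs_sub_comm,
          ← sq_abs t]
        field_simp
        ring

end abelWeight

section abelWeightLogStep

variable {n : ℕ} {t : ℝ}

theorem norm_abelWeight_logStep_le (ht : t ≠ 0) (hn : 2 ≤ n) (htn : |t| ≤ n) :
    ‖abelWeight t (logStep n)‖ ≤ 4 * (n + 1) / |t| := by
  have hpos := logStep_pos (n := n) (by omega)
  calc ‖abelWeight t (logStep n)‖ ≤ 4 / (|t| * logStep n) :=
        norm_abelWeight_le ht hpos (logStep_le_half hn) (abs_mul_logStep_le_one (by omega) htn)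
    _ = 4 * (logStep n)⁻¹ / |t| := by field_simp
    _ ≤ 4 * (n + 1) / |t| := by
        gcongr
        exact inv_logStep_le (by omega)

theorem norm_abelWeight_logStep_sub_succ_le (ht : 1 ≤ |t|) (hn : 2 ≤ n) (htn : |t| ≤ n) :
    ‖abelWeight t (logStep n) - abelWeight t (logStep (n + 1))‖ ≤ 64 / |t| := by
  have ht0 : t ≠ 0 := abs_pos.mp (by linarith)
  have htn' : |t| ≤ (n + 1 : ℕ) := by push_cast; linarith
  have hinv : |(logStep n)⁻¹ - (logStep (n + 1))⁻¹| ≤ 2 := by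
    have h1 := natCast_le_inv_logStep (n := n) (by omega)
    have h2 := inv_logStep_le (n := n) (by omega)
    have h3 := natCast_le_inv_logStep (n := n + 1) (by omega)
    have h4 := inv_logStep_le (n := n + 1) (by omega)
    push_cast at h3 h4
    rw [abs_le]
    constructor <;> linarith
  calc ‖abelWeight t (logStep n) - abelWeight t (logStep (n + 1))‖
      ≤ 16 * (1 + |t|) / t ^ 2 * |(logStep n)⁻¹ - (logStep (n + 1))⁻¹| :=
        norm_abelWeight_sub_le ht0 (logStep_pos (by omega)) (logStep_le_half hn)
          (abs_mul_logStep_le_one (by omega) htn) (logStep_pos (by omega))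
          (logStep_le_half (by omega)) (abs_mul_logStep_le_one (by omega) htn')
    _ ≤ 16 * (2 * |t|) / |t| ^ 2 * 2 := by
        rw [sq_abs]
        gcongr
        linarith
    _ = 64 / |t| := by field_simp; ring

theorem natCast_cpow_eq_sub_mul_abelWeight (ht : t ≠ 0) (hn : 2 ≤ n) (htn : |t| ≤ n) :
    (n : ℂ) ^ (-1 - Complex.I * t)
      = (((n + 1 : ℕ) : ℂ) ^ (-1 - Complex.I * t) - (n : ℂ) ^ (-1 - Complex.I * t))
        * abelWeight t (logStep n) := by
  have hne := exp_mul_sub_one_ne_zero ht (logStep_pos (by omega)) (logStep_le_half hn)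
    (abs_mul_logStep_le_one (by omega) htn)
  rw [natCast_add_one_cpow (by omega), abelWeight, ← mul_sub_one, mul_assoc,
    mul_inv_cancel₀ hne, mul_one]

end abelWeightLogStep

theorem norm_sum_Ioc_natCast_cpow_le_one {N N' : ℕ} (hN : 0 < N) (hN' : N' ≤ 2 * N) (t : ℝ) :
    ‖∑ n ∈ Ioc N N', (n : ℂ) ^ (-1 - Complex.I * t)‖ ≤ 1 := by
  have hN0 : (0 : ℝ) < N := by exact_mod_cast hN
  calc ‖∑ n ∈ Ioc N N', (n : ℂ) ^ (-1 - Complex.I * t)‖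
      ≤ (N' - N : ℕ) • (N : ℝ)⁻¹ := by
        refine (norm_sum_le _ _).trans ?_
        rw [← Nat.card_Ioc]
        refine sum_le_card_nsmul _ _ _ fun n hn => ?_
        rw [norm_natCast_cpow_neg_one_sub]
        gcongr
        exact (mem_Ioc.mp hn).1.le
    _ ≤ N • (N : ℝ)⁻¹ := by gcongr; omega
    _ = 1 := by rw [nsmul_eq_mul, mul_inv_cancel₀ hN0.ne']

/-- If `N > T ≥ |t| > 0` and `N < N' ≤ 2N`, then `|∑_{N < n ≤ N'} n^{-1-it}| ≪ 1/|t|`. -/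
theorem stmt9 :
    ∃ C : ℝ, 0 < C ∧ ∀ (N N' : ℕ) (T t : ℝ), 1 ≤ T → |t| ≤ T → 0 < |t| →
      T < (N : ℝ) → N < N' → N' ≤ 2 * N →
      ‖∑ n ∈ Finset.Ioc N N', (n : ℂ) ^ (-(1 : ℂ) - Complex.I * (t : ℂ))‖ ≤ C / |t| := by
  refine ⟨88, by norm_num, fun N N' T t hT htT ht hTN hNN' hN'N => ?_⟩
  have hN : 2 ≤ N := by exact_mod_cast hT.trans_lt hTN
  have hlarge : ∀ n, N < n → 2 ≤ n ∧ |t| ≤ n := fun n hn =>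
    ⟨by omega, htT.trans (hTN.trans (Nat.cast_lt.mpr hn)).le⟩
  rcases le_or_gt |t| 1 with ht1 | ht1
  · calc _ ≤ 1 := norm_sum_Ioc_natCast_cpow_le_one (by omega) hN'N t
      _ ≤ 88 / |t| := by rw [le_div_iff₀ ht]; linarith
  have hcard : ((N' - N - 1 : ℕ) : ℝ) ≤ N := by norm_cast; omega
  refine (norm_sum_Ioc_le_of_eq_sub_mul (d := fun n => abelWeight t (logStep n))
    (U := (N : ℝ)⁻¹) (D := 12 * N / |t|) (Δ := 64 / |t|) hNN'
    (fun n hn => ?_) (fun n hn => ?_) (fun n hn => ?_) (fun n hn => ?_)).trans ?_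
  · obtain ⟨hn2, htn⟩ := hlarge n (mem_Ioc.mp hn).1
    exact natCast_cpow_eq_sub_mul_abelWeight (abs_pos.mp ht) hn2 htn
  · rw [norm_natCast_cpow_neg_one_sub]
    gcongr
    exact_mod_cast (mem_Ioc.mp hn).1.le
  · obtain ⟨hn2, htn⟩ := hlarge n (mem_Ioc.mp hn).1
    have hn2N : (n : ℝ) ≤ 2 * N := by exact_mod_cast (mem_Ioc.mp hn).2.trans hN'N
    exact (norm_abelWeight_logStep_le (abs_pos.mp ht) hn2 htn).trans
      (div_le_div_of_nonneg_right (by linarith) ht.le)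
  · obtain ⟨hn2, htn⟩ := hlarge n (by simp at hn; omega)
    exact norm_abelWeight_logStep_sub_succ_le ht1.le hn2 htn
  · have hN0 : (0 : ℝ) < N := by positivity
    calc _ ≤ 2 * ((N : ℝ)⁻¹ * (12 * N / |t|)) + N * ((N : ℝ)⁻¹ * (64 / |t|)) := by gcongr
      _ = 88 / |t| := by field_simp; ring
end
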